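/- arXiv:1007.1373 — 2 statements merged into one kernel-verified Lean document; each statement's English description precedes it below -/
import Mathlib

section
/- For all x, y ∈ (Fin 4)^ℕ with x ≠ y, if n = min{k : x k ≠ y k} is the first index of disagreement, then (1−2α)·α^n ≤ ‖π(x) − π(y)‖ ≤ √2 · α^n, where ‖·‖ is the Euclidean norm on ℝ². -/
/-!
Only the terms with index `k ≥ n` survive in `π x - π y = ∑ αᵏ • (v (x k) - v (y k))`.
Each difference of corners has Euclidean norm at most `√2 (1 - α)`, and the geometric tail
from `n` on sums to `αⁿ / (1 - α)`: this is the upper bound. For the lower bound, pick a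
coordinate in which `v (x n)` and `v (y n)` have opposite signs: there the `n`-th term has
size `αⁿ (1 - α)`, while all later terms together have size at most `αⁿ⁺¹`.
-/

/-- The four corner vectors `(±(1-α)/2, ±(1-α)/2)` of the 4-corner Cantor construction. -/
noncomputable def cornerV (α : ℝ) : Fin 4 → EuclideanSpace ℝ (Fin 2) := fun i =>
  (WithLp.equiv 2 (Fin 2 → ℝ)).symm
    ![if (i : ℕ) % 2 = 0 then (1 - α) / 2 else -((1 - α) / 2),
      if (i : ℕ) < 2 then (1 - α) / 2 else -((1 - α) / 2)]

/-- The coding map `π(x) = ∑ αⁿ • v (x n)` of the 4-corner Cantor set. -/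
noncomputable def cantorPi (α : ℝ) (x : ℕ → Fin 4) : EuclideanSpace ℝ (Fin 2) :=
  ∑' n : ℕ, α ^ n • cornerV α (x n)

section GeometricWeights

variable {E : Type*} [NormedAddCommGroup E] [NormedSpace ℝ E] {α C : ℝ} {d : ℕ → E}

theorem summable_pow_smul_of_norm_le [CompleteSpace E] (h0 : 0 ≤ α) (h1 : α < 1)
    (hd : ∀ k, ‖d k‖ ≤ C) : Summable fun k => α ^ k • d k :=
  .of_norm_bounded ((summable_geometric_of_lt_one h0 h1).mul_right C) fun k => by
    rw [norm_smul, norm_pow, Real.norm_of_nonneg h0]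
    exact mul_le_mul_of_nonneg_left (hd k) (pow_nonneg h0 k)

theorem norm_tsum_pow_smul_le (h0 : 0 ≤ α) (h1 : α < 1) (hd : ∀ k, ‖d k‖ ≤ C) :
    ‖∑' k, α ^ k • d k‖ ≤ C / (1 - α) := by
  refine tsum_of_norm_bounded (g := fun k => α ^ k * C) ?_ fun k => ?_
  · simpa [div_eq_inv_mul] using (hasSum_geometric_of_lt_one h0 h1).mul_right C
  · rw [norm_smul, norm_pow, Real.norm_of_nonneg h0]
    exact mul_le_mul_of_nonneg_left (hd k) (pow_nonneg h0 k)

theorem sub_le_norm_tsum_pow_smul [CompleteSpace E] (h0 : 0 ≤ α) (h1 : α < 1)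
    (hd : ∀ k, ‖d k‖ ≤ C) : ‖d 0‖ - α * (C / (1 - α)) ≤ ‖∑' k, α ^ k • d k‖ := by
  have htail : ‖∑' k, α ^ (k + 1) • d (k + 1)‖ ≤ α * (C / (1 - α)) := by
    simp_rw [pow_succ', mul_smul, tsum_const_smul'', norm_smul, Real.norm_of_nonneg h0]
    exact mul_le_mul_of_nonneg_left (norm_tsum_pow_smul_le h0 h1 fun k => hd (k + 1)) h0
  rw [(summable_pow_smul_of_norm_le h0 h1 hd).tsum_eq_zero_add, pow_zero, one_smul]
  have := norm_sub_norm_le (d 0) (-∑' k, α ^ (k + 1) • d (k + 1))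
  rw [norm_neg, sub_neg_eq_add] at this
  linarith

theorem tsum_pow_smul_eq_pow_smul_tsum_nat_add {n : ℕ} (hzero : ∀ k < n, d k = 0) :
    ∑' k, α ^ k • d k = α ^ n • ∑' k, α ^ k • d (k + n) := by
  have hsupp : (Function.support fun k => α ^ k • d k) ⊆ Set.range (· + n) := by
    intro k hk
    have : n ≤ k := by
      by_contra hlt
      exact hk (by simp [hzero k (not_le.mp hlt)])
    exact ⟨k - n, Nat.sub_add_cancel this⟩
  rw [← (add_left_injective n).tsum_eq hsupp, ← tsum_const_smul'']
  simp_rw [pow_add, mul_comm (α ^ _) (α ^ n), mul_smul]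

theorem norm_tsum_pow_smul_le_of_eq_zero {n : ℕ} (h0 : 0 ≤ α) (h1 : α < 1)
    (hd : ∀ k, ‖d k‖ ≤ C) (hzero : ∀ k < n, d k = 0) :
    ‖∑' k, α ^ k • d k‖ ≤ α ^ n * (C / (1 - α)) := by
  rw [tsum_pow_smul_eq_pow_smul_tsum_nat_add hzero, norm_smul, norm_pow, Real.norm_of_nonneg h0]
  exact mul_le_mul_of_nonneg_left (norm_tsum_pow_smul_le h0 h1 fun k => hd _) (pow_nonneg h0 n)

theorem le_norm_tsum_pow_smul_of_eq_zero [CompleteSpace E] {n : ℕ} (h0 : 0 ≤ α) (h1 : α < 1)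
    (hd : ∀ k, ‖d k‖ ≤ C) (hzero : ∀ k < n, d k = 0) :
    α ^ n * (‖d n‖ - α * (C / (1 - α))) ≤ ‖∑' k, α ^ k • d k‖ := by
  rw [tsum_pow_smul_eq_pow_smul_tsum_nat_add hzero, norm_smul, norm_pow, Real.norm_of_nonneg h0]
  refine mul_le_mul_of_nonneg_left ?_ (pow_nonneg h0 n)
  simpa only [zero_add] using sub_le_norm_tsum_pow_smul h0 h1 fun k => hd (k + n)

end GeometricWeights

theorem abs_cornerV_apply (α : ℝ) (i : Fin 4) (j : Fin 2) :
    |cornerV α i j| = |1 - α| / 2 := by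
  fin_cases i <;> fin_cases j <;> simp [cornerV, abs_div]

theorem exists_cornerV_apply_eq_neg (α : ℝ) {i i' : Fin 4} (h : i ≠ i') :
    ∃ j, cornerV α i j = -cornerV α i' j := by
  fin_cases i <;> fin_cases i' <;> simp_all [cornerV, Fin.exists_fin_two]

theorem abs_cornerV_sub_apply_le (α : ℝ) (i i' : Fin 4) (j : Fin 2) :
    |cornerV α i j - cornerV α i' j| ≤ |1 - α| :=
  (abs_sub _ _).trans_eq (by rw [abs_cornerV_apply, abs_cornerV_apply, add_halves])

theorem exists_abs_cornerV_sub_apply_eq (α : ℝ) {i i' : Fin 4} (h : i ≠ i') :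
    ∃ j, |cornerV α i j - cornerV α i' j| = |1 - α| := by
  obtain ⟨j, hj⟩ := exists_cornerV_apply_eq_neg α h
  refine ⟨j, ?_⟩
  rw [hj, ← neg_add', abs_neg, ← two_mul, abs_mul, abs_cornerV_apply, abs_two,
    mul_div_cancel₀ _ two_ne_zero]

theorem norm_cornerV_sub_le (α : ℝ) (i i' : Fin 4) :
    ‖cornerV α i - cornerV α i'‖ ≤ √2 * |1 - α| := by
  rw [← Real.sqrt_sq (abs_nonneg (1 - α)), ← Real.sqrt_mul zero_le_two, EuclideanSpace.norm_eq]
  refine Real.sqrt_le_sqrt ?_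
  have hsq j : ‖(cornerV α i - cornerV α i') j‖ ^ 2 ≤ |1 - α| ^ 2 :=
    pow_le_pow_left₀ (norm_nonneg _) (abs_cornerV_sub_apply_le α i i' j) 2
  simpa only [Fin.sum_univ_two, two_mul] using add_le_add (hsq 0) (hsq 1)

theorem summable_pow_smul_cornerV {α : ℝ} (h0 : 0 ≤ α) (h1 : α < 1) (x : ℕ → Fin 4) :
    Summable fun k => α ^ k • cornerV α (x k) :=
  summable_pow_smul_of_norm_le h0 h1 fun k =>
    Finset.single_le_sum (fun i _ => norm_nonneg (cornerV α i)) (Finset.mem_univ (x k))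

theorem cantorPi_sub_cantorPi {α : ℝ} (h0 : 0 ≤ α) (h1 : α < 1) (x y : ℕ → Fin 4) :
    cantorPi α x - cantorPi α y = ∑' k, α ^ k • (cornerV α (x k) - cornerV α (y k)) := by
  simp_rw [smul_sub]
  exact ((summable_pow_smul_cornerV h0 h1 x).tsum_sub (summable_pow_smul_cornerV h0 h1 y)).symm

theorem cantorPi_sub_apply {α : ℝ} (h0 : 0 ≤ α) (h1 : α < 1) (x y : ℕ → Fin 4) (j : Fin 2) :
    (cantorPi α x - cantorPi α y) j = ∑' k, α ^ k • (cornerV α (x k) j - cornerV α (y k) j) := by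
  rw [cantorPi_sub_cantorPi h0 h1]
  simpa using (EuclideanSpace.proj (𝕜 := ℝ) j).map_tsum
    (summable_pow_smul_of_norm_le h0 h1 fun k => norm_cornerV_sub_le α (x k) (y k))

theorem norm_cantorPi_sub_le {α : ℝ} (h0 : 0 ≤ α) (h1 : α < 1) {x y : ℕ → Fin 4} {n : ℕ}
    (hmin : ∀ k < n, x k = y k) : ‖cantorPi α x - cantorPi α y‖ ≤ √2 * α ^ n := by
  have hpos : 0 < 1 - α := sub_pos.mpr h1
  calc ‖cantorPi α x - cantorPi α y‖ ≤ α ^ n * (√2 * |1 - α| / (1 - α)) := by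
        rw [cantorPi_sub_cantorPi h0 h1]
        exact norm_tsum_pow_smul_le_of_eq_zero h0 h1 (fun k => norm_cornerV_sub_le α (x k) (y k))
          fun k hk => by rw [hmin k hk, sub_self]
    _ = √2 * α ^ n := by rw [abs_of_pos hpos, mul_div_cancel_right₀ _ hpos.ne', mul_comm]

theorem le_norm_cantorPi_sub {α : ℝ} (h0 : 0 ≤ α) (h1 : α < 1) {x y : ℕ → Fin 4} {n : ℕ}
    (hn : x n ≠ y n) (hmin : ∀ k < n, x k = y k) :
    (1 - 2 * α) * α ^ n ≤ ‖cantorPi α x - cantorPi α y‖ := by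
  have hpos : 0 < 1 - α := sub_pos.mpr h1
  obtain ⟨j, hj⟩ := exists_abs_cornerV_sub_apply_eq α hn
  calc (1 - 2 * α) * α ^ n
      = α ^ n * (‖cornerV α (x n) j - cornerV α (y n) j‖ - α * (|1 - α| / (1 - α))) := by
        rw [Real.norm_eq_abs, hj, abs_of_pos hpos, div_self hpos.ne']; ring
    _ ≤ ‖(cantorPi α x - cantorPi α y) j‖ := by
        rw [cantorPi_sub_apply h0 h1]
        exact le_norm_tsum_pow_smul_of_eq_zero
          (d := fun k => cornerV α (x k) j - cornerV α (y k) j) h0 h1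
          (fun k => abs_cornerV_sub_apply_le α (x k) (y k) j)
          fun k hk => by rw [hmin k hk, sub_self]
    _ ≤ ‖cantorPi α x - cantorPi α y‖ := PiLp.norm_apply_le _ j

theorem stmt1_general (α : ℝ) (hα : α ∈ Set.Ioo (0 : ℝ) (1 / 2)) (x y : ℕ → Fin 4)
    (n : ℕ) (hn : x n ≠ y n) (hmin : ∀ k < n, x k = y k) :
    (1 - 2 * α) * α ^ n ≤ ‖cantorPi α x - cantorPi α y‖ ∧
      ‖cantorPi α x - cantorPi α y‖ ≤ Real.sqrt 2 * α ^ n := by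
  have h0 : 0 ≤ α := hα.1.le
  have h1 : α < 1 := by linarith [hα.2]
  exact ⟨le_norm_cantorPi_sub h0 h1 hn hmin, norm_cantorPi_sub_le h0 h1 hmin⟩

theorem stmt1 (α : ℝ) (hα : α ∈ Set.Ioo (0 : ℝ) (1 / 2)) (x y : ℕ → Fin 4)
    (hxy : x ≠ y) (n : ℕ) (hn : x n ≠ y n) (hmin : ∀ k < n, x k = y k) :
    (1 - 2 * α) * α ^ n ≤ ‖cantorPi α x - cantorPi α y‖ ∧
      ‖cantorPi α x - cantorPi α y‖ ≤ Real.sqrt 2 * α ^ n :=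
  stmt1_general α hα x y n hn hmin
end

section
/- With respect to the standard metric d(x,y) = (1/2)^{min{k : x k ≠ y k}} on the sequence space (Fin 4)^ℕ (and d(x,x)=0), the coding map π is Hölder continuous with constant √2 and exponent s = log(1/α)/log 2; that is, ‖π(x) − π(y)‖ ≤ √2 · d(x,y)^s for all x, y. -/
open Classical in
/-- The standard ultrametric distance `d(x,y) = (1/2)^{min{k : x k ≠ y k}}` on `(Fin 4)^ℕ`. -/
noncomputable def seqDist (x y : ℕ → Fin 4) : ℝ :=
  if h : x = y then 0 else (1 / 2) ^ Nat.find (Function.ne_iff.mp h)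

/-!
If `x` and `y` first differ at index `N`, then `seqDist x y ^ s = α ^ N`, because
`(1/2) ^ s = α` for `s = log (1/α) / log 2`. On the other side, only the terms with `n ≥ N`
survive in `π x - π y`; each has norm at most `αⁿ` times the diameter `√2 (1 - α)` of the
corner set, and the geometric tail sums to `√2 αᴺ`.
-/

open Real

section CodingMap

variable {E ι : Type*} [NormedAddCommGroup E] [NormedSpace ℝ E] {v : ι → E} {R α : ℝ}

theorem summable_pow_smul_comp [CompleteSpace E] (hα₀ : 0 ≤ α) (hα₁ : α < 1)
    (hv : ∀ i, ‖v i‖ ≤ R) (x : ℕ → ι) : Summable fun n => α ^ n • v (x n) := by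
  refine Summable.of_norm_bounded ((summable_geometric_of_lt_one hα₀ hα₁).mul_right R) fun n => ?_
  rw [norm_smul, norm_pow, norm_of_nonneg hα₀]
  exact mul_le_mul_of_nonneg_left (hv _) (pow_nonneg hα₀ n)

theorem norm_tsum_pow_smul_sub_le_of_agree [CompleteSpace E] (hα₀ : 0 ≤ α) (hα₁ : α < 1)
    (hv : ∀ i, ‖v i‖ ≤ R) {x y : ℕ → ι} {N : ℕ} (hxy : ∀ n < N, x n = y n) :
    ‖∑' n, α ^ n • v (x n) - ∑' n, α ^ n • v (y n)‖ ≤ 2 * R * α ^ N / (1 - α) := by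
  have hx := summable_pow_smul_comp hα₀ hα₁ hv x
  have hy := summable_pow_smul_comp hα₀ hα₁ hv y
  have hhead : ∑ n ∈ Finset.range N, (α ^ n • v (x n) - α ^ n • v (y n)) = 0 :=
    Finset.sum_eq_zero fun n hn => by rw [hxy n (Finset.mem_range.mp hn), sub_self]
  have htail : HasSum (fun n => 2 * R * α ^ N * α ^ n) (2 * R * α ^ N / (1 - α)) := by
    simpa only [div_eq_mul_inv] using (hasSum_geometric_of_lt_one hα₀ hα₁).mul_left (2 * R * α ^ N)
  rw [← hx.tsum_sub hy, ← (hx.sub hy).sum_add_tsum_nat_add N, hhead, zero_add]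
  refine tsum_of_norm_bounded htail fun n => ?_
  calc ‖α ^ (n + N) • v (x (n + N)) - α ^ (n + N) • v (y (n + N))‖
      ≤ α ^ (n + N) * (‖v (x (n + N))‖ + ‖v (y (n + N))‖) := by
        rw [← smul_sub, norm_smul, norm_pow, norm_of_nonneg hα₀]
        exact mul_le_mul_of_nonneg_left (norm_sub_le _ _) (pow_nonneg hα₀ _)
    _ ≤ α ^ (n + N) * (R + R) := by gcongr <;> exact hv _
    _ = 2 * R * α ^ N * α ^ n := by ring

end CodingMap

theorem norm_cornerV {α : ℝ} (hα : α ≤ 1) (i : Fin 4) :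
    ‖cornerV α i‖ = √2 * ((1 - α) / 2) := by
  have hsq : ‖cornerV α i‖ = √(2 * ((1 - α) / 2) ^ 2) := by
    rw [EuclideanSpace.norm_eq]
    congr 1
    simp only [cornerV, WithLp.equiv_symm_apply, WithLp.ofLp_toLp, Fin.sum_univ_two,
      Matrix.cons_val_zero, Matrix.cons_val_one, Real.norm_eq_abs, sq_abs]
    split_ifs <;> ring
  rw [hsq, sqrt_mul zero_le_two, sqrt_sq (by linarith)]

theorem exists_agree_seqDist_eq_of_ne {x y : ℕ → Fin 4} (hxy : x ≠ y) :
    ∃ N : ℕ, (∀ n < N, x n = y n) ∧ seqDist x y = (1 / 2) ^ N := by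
  classical
  have hne := Function.ne_iff.mp hxy
  refine ⟨Nat.find hne, fun n hn => not_not.mp (Nat.find_min hne hn), ?_⟩
  rw [seqDist, dif_neg hxy]

theorem half_pow_rpow_log_div_log_two {α : ℝ} (hα : 0 < α) (N : ℕ) :
    ((1 / 2 : ℝ) ^ N) ^ (log (1 / α) / log 2) = α ^ N := by
  rw [← rpow_pow_comm (by norm_num), log_div_log, one_div, inv_rpow zero_le_two,
    rpow_logb zero_lt_two (by norm_num) (one_div_pos.mpr hα), one_div, inv_inv]

theorem stmt2 (α : ℝ) (hα : α ∈ Set.Ioo (0 : ℝ) (1 / 2)) (x y : ℕ → Fin 4) :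
    ‖cantorPi α x - cantorPi α y‖ ≤
      Real.sqrt 2 * seqDist x y ^ (Real.log (1 / α) / Real.log 2) := by
  obtain ⟨hα₀, hα₂⟩ := hα
  have hα₁ : α < 1 := by linarith
  rcases eq_or_ne x y with rfl | hxy
  · rw [sub_self, norm_zero]
    exact mul_nonneg (sqrt_nonneg 2) (rpow_nonneg (by simp [seqDist]) _)
  obtain ⟨N, hagree, hdist⟩ := exists_agree_seqDist_eq_of_ne hxy
  rw [hdist, half_pow_rpow_log_div_log_two hα₀]
  calc ‖cantorPi α x - cantorPi α y‖
      ≤ 2 * (√2 * ((1 - α) / 2)) * α ^ N / (1 - α) :=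
        norm_tsum_pow_smul_sub_le_of_agree hα₀.le hα₁ (fun i => (norm_cornerV hα₁.le i).le) hagree
    _ = √2 * α ^ N := by field_simp [(sub_pos.mpr hα₁).ne']
end
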